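/- arXiv:2206.03234 — 4 statements merged into one kernel-verified Lean document; each statement's English description precedes it below -/
import Mathlib

section
/- Let α, α_base ∈ [0,1]. Then the minimum of ηv over all ηv ∈ [0,1] such that there exists β_val ∈ [0,1] with α = α_base·(1-ηv) + β_val·ηv equals η(α_base, α), where η(a,b) = 1 - b/a if b < a, η(a,b) = 1 - (1-b)/(1-a) if b > a, and 0 if a = b (with η(0,b)=1 for b>0 and η(1,b)=1 for b<1). -/
/-!
If `b < a`, then `(1 - η) * a = b - η * c ≤ b`, so `η ≥ 1 - b / a`, with equality for `c = 0`.
The reflection `x ↦ 1 - x` preserves mixtures and their weights, and turns the case `a < b` into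
this one, which is where the formula `1 - (1 - b) / (1 - a)` comes from.
-/

open Set

noncomputable def eta (a b : ℝ) : ℝ :=
  if a = b then 0
  else if b < a then 1 - b / a
  else 1 - (1 - b) / (1 - a)

def mixtureWeights (a b : ℝ) : Set ℝ :=
  {η | η ∈ Icc (0:ℝ) 1 ∧ ∃ c ∈ Icc (0:ℝ) 1, b = (1 - η) * a + η * c}

lemma mixtureWeights_one_sub (a b : ℝ) : mixtureWeights (1 - a) (1 - b) = mixtureWeights a b := by
  ext η
  constructor <;> rintro ⟨hη, c, ⟨hc0, hc1⟩, hmix⟩ <;>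
    exact ⟨hη, 1 - c, ⟨by linarith, by linarith⟩, by linarith⟩

lemma isLeast_mixtureWeights_self (a : ℝ) : IsLeast (mixtureWeights a a) 0 :=
  ⟨⟨left_mem_Icc.2 zero_le_one, 0, left_mem_Icc.2 zero_le_one, by ring⟩, fun _ hη => hη.1.1⟩

lemma isLeast_mixtureWeights_of_lt {a b : ℝ} (hb : 0 ≤ b) (hba : b < a) :
    IsLeast (mixtureWeights a b) (1 - b / a) := by
  have ha : 0 < a := hb.trans_lt hba
  have hdiv_nonneg : 0 ≤ b / a := div_nonneg hb ha.le
  have hdiv_le_one : b / a ≤ 1 := (div_le_one ha).2 hba.le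
  refine ⟨⟨⟨by linarith, by linarith⟩, 0, left_mem_Icc.2 zero_le_one, by field_simp; ring⟩, ?_⟩
  rintro η ⟨⟨hη0, -⟩, c, ⟨hc0, -⟩, hmix⟩
  have hmass : (1 - η) * a ≤ b := by nlinarith [mul_nonneg hη0 hc0]
  linarith [(le_div_iff₀ ha).2 hmass]

theorem eta_is_minimal_mixture_weight_general (a b : ℝ)
    (hb : b ∈ Set.Icc (0:ℝ) 1) :
    IsLeast {η : ℝ | η ∈ Set.Icc (0:ℝ) 1 ∧
      ∃ c ∈ Set.Icc (0:ℝ) 1, b = (1 - η) * a + η * c} (eta a b) := by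
  change IsLeast (mixtureWeights a b) _
  unfold eta
  split_ifs with hab hba
  · exact hab ▸ isLeast_mixtureWeights_self a
  · exact isLeast_mixtureWeights_of_lt hb.1 hba
  · have hab' : a < b := lt_of_le_of_ne (not_lt.1 hba) hab
    rw [← mixtureWeights_one_sub]
    exact isLeast_mixtureWeights_of_lt (sub_nonneg.2 hb.2) (by linarith)

theorem eta_is_minimal_mixture_weight (a b : ℝ)
    (ha : a ∈ Set.Icc (0:ℝ) 1) (hb : b ∈ Set.Icc (0:ℝ) 1) :
    IsLeast {η : ℝ | η ∈ Set.Icc (0:ℝ) 1 ∧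
      ∃ c ∈ Set.Icc (0:ℝ) 1, b = (1 - η) * a + η * c} (eta a b) :=
  eta_is_minimal_mixture_weight_general a b hb
end

section
/- Let w : G → [0,1] with ∑_g w(g) = 1, π : G → [0,1], and α : G → [0,1] be finitely indexed families (G a finite set). Define μ(x) = ∑_{g ∈ G} w(g)·π(g)·η(x, α(g)) for x ∈ [0,1]. Then min_{x ∈ [0,1]} μ(x) = min_{x ∈ S} μ(x), where S = {0, 1} ∪ {α(g) : g ∈ G}. That is, the one-dimensional minimization of μ is attained at one of finitely many points. -/
open Set

lemma eta_symm (a b : ℝ) : eta (1-a) (1-b) = eta a b := by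
  unfold eta
  rcases lt_trichotomy a b with h | h | h
  · rw [if_neg (by intro hh; apply absurd h; linarith), if_pos (by linarith),
        if_neg (ne_of_gt h).symm, if_neg (by linarith)]
  · rw [if_pos (by linarith), if_pos h]
  · rw [if_neg (by intro hh; apply absurd h; linarith), if_neg (by linarith),
        if_neg (ne_of_gt h), if_pos h]
    ring_nf

lemma eta_eq_left {a b : ℝ} (hb : 0 < b) (hba : b ≤ a) : eta a b = 1 - b / a := by
  unfold eta
  rcases eq_or_lt_of_le hba with h | h
  · rw [if_pos h.symm, h, div_self (by rw [← h]; exact ne_of_gt hb)]; ring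
  · rw [if_neg (ne_of_gt h), if_pos h]

lemma eta_pos_zero {a : ℝ} (ha : 0 < a) : eta a 0 = 1 := by
  unfold eta
  rw [if_neg (ne_of_gt ha), if_pos ha]
  simp

lemma eta_self (a : ℝ) : eta a a = 0 := by unfold eta; rw [if_pos rfl]

lemma eta_concave_left (b p q y t : ℝ) (hb0 : 0 ≤ b) (hbp : b ≤ p) (hpq : p < q)
    (ht0 : 0 ≤ t) (ht1 : t ≤ 1) (hy : y = (1-t)*p + t*q) :
    (1-t) * eta p b + t * eta q b ≤ eta y b := by
  have hpy : p ≤ y := by nlinarith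
  have hyq : y ≤ q := by nlinarith
  rcases eq_or_lt_of_le hb0 with hb | hb
  · -- b = 0
    subst hb
    rcases eq_or_lt_of_le hbp with hp | hp
    · -- p = 0
      have hq : (0:ℝ) < q := by linarith
      rcases eq_or_lt_of_le ht0 with ht | ht
      · have hy0 : y = 0 := by rw [hy, ← ht, ← hp]; ring
        rw [hy0, ← hp, ← ht, eta_self]; simp
      · have hy0 : 0 < y := by nlinarith
        rw [← hp, eta_self, eta_pos_zero hq, eta_pos_zero hy0]; linarith
    · have hq : (0:ℝ) < q := by linarith
      have hy0 : 0 < y := by linarith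
      rw [eta_pos_zero hp, eta_pos_zero hq, eta_pos_zero hy0]; linarith
  · -- 0 < b
    have hp0 : 0 < p := lt_of_lt_of_le hb hbp
    have hq0 : 0 < q := by linarith
    have hy0 : 0 < y := by linarith
    rw [eta_eq_left hb hbp, eta_eq_left hb (by linarith), eta_eq_left hb (by linarith)]
    have key : b / y ≤ (1-t) * (b/p) + t * (b/q) := by
      have e : (1-t)*(b/p) + t*(b/q) = ((1-t)*b*q + t*b*p) / (p*q) := by
        field_simp
        try ring
      rw [e, div_le_div_iff₀ hy0 (mul_pos hp0 hq0), hy]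
      nlinarith [mul_nonneg (mul_nonneg (mul_nonneg ht0 (by linarith : (0:ℝ) ≤ 1-t)) hb0)
        (sq_nonneg (p-q))]
    linarith

lemma eta_concave_right (b p q y t : ℝ) (hb1 : b ≤ 1) (hqb : q ≤ b) (hpq : p < q)
    (ht0 : 0 ≤ t) (ht1 : t ≤ 1) (hy : y = (1-t)*p + t*q) :
    (1-t) * eta p b + t * eta q b ≤ eta y b := by
  have h := eta_concave_left (1-b) (1-q) (1-p) (1-y) (1-t)
    (by linarith) (by linarith) (by linarith) (by linarith) (by linarith)
    (by rw [hy]; ring)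
  rw [eta_symm, eta_symm, eta_symm] at h
  linarith

theorem mu_min_attained_finite {G : Type*} [Fintype G]
    (w π α : G → ℝ)
    (hw : ∀ g, w g ∈ Set.Icc (0:ℝ) 1) (hwsum : ∑ g, w g = 1)
    (hπ : ∀ g, π g ∈ Set.Icc (0:ℝ) 1) (hα : ∀ g, α g ∈ Set.Icc (0:ℝ) 1) :
    ∃ x ∈ ({0, 1} ∪ Set.range α : Set ℝ),
      ∀ y ∈ Set.Icc (0:ℝ) 1,
        (∑ g, w g * π g * eta x (α g)) ≤ ∑ g, w g * π g * eta y (α g) := by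
  classical
  set f : ℝ → ℝ := fun x => ∑ g, w g * π g * eta x (α g) with hf
  set S : Finset ℝ := insert 0 (insert 1 (Finset.image α Finset.univ)) with hS
  have h0S : (0:ℝ) ∈ S := by simp [hS]
  have h1S : (1:ℝ) ∈ S := by simp [hS]
  have hαS : ∀ g, α g ∈ S := fun g => by simp [hS]
  obtain ⟨x₀, hx₀S, hx₀min⟩ := S.exists_min_image f ⟨0, h0S⟩
  have hwπ : ∀ g, 0 ≤ w g * π g := fun g => mul_nonneg (hw g).1 (hπ g).1
  refine ⟨x₀, ?_, ?_⟩
  · simp only [hS, Finset.mem_insert, Finset.mem_image, Finset.mem_univ, true_and] at hx₀S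
    rcases hx₀S with h | h | ⟨g, hg⟩
    · exact Set.mem_union_left _ (by simp [h])
    · exact Set.mem_union_left _ (by simp [h])
    · exact Set.mem_union_right _ ⟨g, hg⟩
  · intro y hy
    show f x₀ ≤ f y
    have hPne : 0 ∈ S.filter (fun s => s ≤ y) := Finset.mem_filter.2 ⟨h0S, hy.1⟩
    have hQne : 1 ∈ S.filter (fun s => y ≤ s) := Finset.mem_filter.2 ⟨h1S, hy.2⟩
    set p := (S.filter (fun s => s ≤ y)).max' ⟨0, hPne⟩ with hp
    set q := (S.filter (fun s => y ≤ s)).min' ⟨1, hQne⟩ with hq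
    have hpmem := Finset.mem_filter.1 ((S.filter (fun s => s ≤ y)).max'_mem ⟨0, hPne⟩)
    have hqmem := Finset.mem_filter.1 ((S.filter (fun s => y ≤ s)).min'_mem ⟨1, hQne⟩)
    have hpS : p ∈ S := hpmem.1
    have hqS : q ∈ S := hqmem.1
    have hpy : p ≤ y := hpmem.2
    have hyq : y ≤ q := hqmem.2
    have hout : ∀ g, α g ≤ p ∨ q ≤ α g := by
      intro g
      rcases le_or_gt (α g) y with h | h
      · have h1 : α g ∈ S.filter (fun s => s ≤ y) := Finset.mem_filter.2 ⟨hαS g, h⟩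
        exact Or.inl (Finset.le_max' _ _ h1)
      · have h1 : α g ∈ S.filter (fun s => y ≤ s) := Finset.mem_filter.2 ⟨hαS g, h.le⟩
        exact Or.inr (Finset.min'_le _ _ h1)
    rcases eq_or_lt_of_le hpy with hpy' | hpy'
    · rw [← hpy']; exact hx₀min p hpS
    rcases eq_or_lt_of_le hyq with hyq' | hyq'
    · rw [hyq']; exact hx₀min q hqS
    have hpq : p < q := lt_trans hpy' hyq'
    have hqp : (0:ℝ) < q - p := by linarith
    set t := (y - p) / (q - p) with htdef
    have ht0 : 0 ≤ t := div_nonneg (by linarith) hqp.le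
    have ht1 : t ≤ 1 := (div_le_one hqp).2 (by linarith)
    have htmul : t * (q - p) = y - p := div_mul_cancel₀ _ (ne_of_gt hqp)
    have hyrep : y = (1-t)*p + t*q := by nlinarith [htmul]
    have hterm : ∀ g, w g * π g * ((1-t) * eta p (α g) + t * eta q (α g))
        ≤ w g * π g * eta y (α g) := by
      intro g
      apply mul_le_mul_of_nonneg_left _ (hwπ g)
      rcases hout g with h | h
      · exact eta_concave_left (α g) p q y t (hα g).1 h hpq ht0 ht1 hyrep
      · exact eta_concave_right (α g) p q y t (hα g).2 h hpq ht0 ht1 hyrep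
    calc f x₀ = (1-t) * f x₀ + t * f x₀ := by ring
      _ ≤ (1-t) * f p + t * f q := by
          have h1 := hx₀min p hpS
          have h2 := hx₀min q hqS
          have := mul_le_mul_of_nonneg_left h1 (by linarith : (0:ℝ) ≤ 1 - t)
          have := mul_le_mul_of_nonneg_left h2 ht0
          linarith
      _ = ∑ g, w g * π g * ((1-t) * eta p (α g) + t * eta q (α g)) := by
          simp only [hf, Finset.mul_sum, ← Finset.sum_add_distrib]
          exact Finset.sum_congr rfl fun g _ => by ring
      _ ≤ ∑ g, w g * π g * eta y (α g) := Finset.sum_le_sum fun g _ => hterm g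
      _ = f y := rfl
end

section
/- Monotonicity of unfairness under label merging: let D and D' be two families of conditional distributions over a finite label set Y indexed by y ∈ Y and g ∈ G, where D'_g^y is the pushforward of D_g^y under a map f_y : Y → Y. Then unfairness(D') ≤ unfairness(D), where unfairness(D) = min over {η_g^y ∈ [0,1]} such that each D_g^y = (1-η_g^y)·B^y + η_g^y·N_g^y for some probability distributions B^y, N_g^y, of the weighted sum ∑_g w_g ∑_y π_g^y η_g^y. -/
def IsProbVec {Y : Type*} [Fintype Y] (p : Y → ℝ) : Prop :=
  (∀ z, 0 ≤ p z) ∧ ∑ z, p z = 1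

noncomputable def pushforward {Y : Type*} [Fintype Y] [DecidableEq Y]
    (f : Y → Y) (p : Y → ℝ) : Y → ℝ :=
  fun z => ∑ y ∈ Finset.univ.filter (fun y => f y = z), p y

noncomputable def unfairnessVal {G Y : Type*} [Fintype G] [Fintype Y]
    (w : G → ℝ) (π : G → Y → ℝ) (D : G → Y → Y → ℝ) : ℝ :=
  sInf { u : ℝ | ∃ (η : G → Y → ℝ) (B : Y → Y → ℝ) (N : G → Y → Y → ℝ),
    (∀ g y, η g y ∈ Set.Icc (0:ℝ) 1) ∧
    (∀ y, IsProbVec (B y)) ∧ (∀ g y, IsProbVec (N g y)) ∧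
    (∀ g y z, D g y z = (1 - η g y) * B y z + η g y * N g y z) ∧
    u = ∑ g, ∑ y, w g * π g y * η g y }

lemma pushforward_prob {Y : Type*} [Fintype Y] [DecidableEq Y]
    (f : Y → Y) (p : Y → ℝ) (hp : IsProbVec p) : IsProbVec (pushforward f p) := by
  constructor
  · intro z
    exact Finset.sum_nonneg fun y _ => hp.1 y
  · rw [← hp.2]
    exact Finset.sum_fiberwise _ _ _

theorem unfairness_monotone_under_merging {G Y : Type*}
    [Fintype G] [Fintype Y] [DecidableEq Y] [Nonempty Y]
    (w : G → ℝ) (π : G → Y → ℝ) (D : G → Y → Y → ℝ) (f : Y → Y → Y)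
    (hw : ∀ g, 0 ≤ w g) (hwsum : ∑ g, w g = 1)
    (hπ : ∀ g, IsProbVec (π g)) (hD : ∀ g y, IsProbVec (D g y)) :
    unfairnessVal w π (fun g y => pushforward (f y) (D g y)) ≤ unfairnessVal w π D := by
  apply csInf_le_csInf
  · -- bounded below by 0
    refine ⟨0, ?_⟩
    rintro u ⟨η, B, N, hη, hB, hN, hdec, rfl⟩
    apply Finset.sum_nonneg; intro g _
    apply Finset.sum_nonneg; intro y _
    exact mul_nonneg (mul_nonneg (hw g) ((hπ g).1 y)) (hη g y).1
  · -- source set nonempty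
    refine ⟨∑ g, ∑ y, w g * π g y * 1, fun _ _ => 1,
      fun _ z => if z = Classical.arbitrary Y then 1 else 0, D, ?_, ?_, ?_, ?_, rfl⟩
    · intro g y; exact ⟨zero_le_one, le_refl 1⟩
    · intro y
      constructor
      · intro z; positivity
      · simp
    · intro g y; exact hD g y
    · intro g y z; ring
  · -- subset
    rintro u ⟨η, B, N, hη, hB, hN, hdec, rfl⟩
    refine ⟨η, fun y => pushforward (f y) (B y), fun g y => pushforward (f y) (N g y),
      hη, fun y => pushforward_prob _ _ (hB y), fun g y => pushforward_prob _ _ (hN g y),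
      ?_, rfl⟩
    intro g y z
    simp only [pushforward]
    rw [Finset.mul_sum, Finset.mul_sum, ← Finset.sum_add_distrib]
    exact Finset.sum_congr rfl fun x _ => hdec g y x
end

section
/- Lower bound on error equals total variation of label proportions: in binary classification, the minimum of the error ∑_g w_g(π_g^0 α_g^{01} + π_g^1 α_g^{10}) over all row-stochastic 2×2 confusion matrices (α_g^{yz}) satisfying π_g^0 α_g^{01} + π_g^1(1 - α_g^{10}) = p̂_g^1 for each g equals ∑_g w_g |π_g^1 - p̂_g^1|, assuming π_g^1 ∈ [0,1] and p̂_g^1 ∈ [0,1] for each g. -/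
/-!
For each group separately, the constraint pins the predicted positive rate, so
`π¹ - p̂¹ = π¹ α¹⁰ - π⁰ α⁰¹` is a difference of the two nonnegative error terms and hence at most
their sum. Equality holds when only one kind of error is made: false positives alone if
`π¹ ≤ p̂¹`, false negatives alone otherwise. Summing with nonnegative weights gives the bound and
its attainment.
-/

open Finset Set

section ConfusionMatrix

variable {K : Type*} [Field K] [LinearOrder K] [IsStrictOrderedRing K]

theorem exists_mem_Icc_mul_eq {x y : K} (hx : 0 ≤ x) (hxy : x ≤ y) :
    ∃ t ∈ Icc (0 : K) 1, y * t = x :=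
  have hy : 0 ≤ y := hx.trans hxy
  ⟨x / y, ⟨div_nonneg hx hy, div_le_one_of_le₀ hxy hy⟩,
    mul_div_cancel_of_imp' fun h => le_antisymm (h ▸ hxy) hx⟩

theorem abs_sub_le_error {π p a b : K} (hπ : π ∈ Icc (0 : K) 1) (ha : 0 ≤ a) (hb : 0 ≤ b)
    (hcon : (1 - π) * a + π * (1 - b) = p) :
    |π - p| ≤ (1 - π) * a + π * b := by
  have hfp : 0 ≤ (1 - π) * a := mul_nonneg (sub_nonneg.2 hπ.2) ha
  have hfn : 0 ≤ π * b := mul_nonneg hπ.1 hb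
  have hdiff : π - p = π * b - (1 - π) * a := by rw [← hcon]; ring
  rw [hdiff, abs_sub_le_iff]
  constructor <;> linarith

theorem exists_error_eq_abs_sub (π : K) {p : K} (hp : p ∈ Icc (0 : K) 1) :
    ∃ a ∈ Icc (0 : K) 1, ∃ b ∈ Icc (0 : K) 1,
      (1 - π) * a + π * (1 - b) = p ∧ (1 - π) * a + π * b = |π - p| := by
  rcases le_total π p with hle | hle
  · obtain ⟨a, ha, hfp⟩ := exists_mem_Icc_mul_eq (sub_nonneg.2 hle) (sub_le_sub_right hp.2 π)
    refine ⟨a, ha, 0, ⟨le_rfl, zero_le_one⟩, ?_, ?_⟩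
    · rw [hfp]; ring
    · rw [abs_sub_comm, abs_of_nonneg (sub_nonneg.2 hle), hfp]; ring
  · obtain ⟨b, hb, hfn⟩ := exists_mem_Icc_mul_eq (sub_nonneg.2 hle) (sub_le_self π hp.1)
    refine ⟨0, ⟨le_rfl, zero_le_one⟩, b, hb, ?_, ?_⟩
    · rw [mul_one_sub, hfn]; ring
    · rw [abs_of_nonneg (sub_nonneg.2 hle), hfn]; ring

end ConfusionMatrix

theorem min_error_eq_total_variation_general {G : Type*} [Fintype G] (w π1 p1 : G → ℝ)
    (hw : ∀ g, 0 ≤ w g)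
    (hπ : ∀ g, π1 g ∈ Set.Icc (0:ℝ) 1) (hp : ∀ g, p1 g ∈ Set.Icc (0:ℝ) 1) :
    IsLeast { E : ℝ | ∃ α01 α10 : G → ℝ,
        (∀ g, α01 g ∈ Set.Icc (0:ℝ) 1) ∧ (∀ g, α10 g ∈ Set.Icc (0:ℝ) 1) ∧
        (∀ g, (1 - π1 g) * α01 g + π1 g * (1 - α10 g) = p1 g) ∧
        E = ∑ g, w g * ((1 - π1 g) * α01 g + π1 g * α10 g) }
      (∑ g, w g * |π1 g - p1 g|) := by
  constructor
  · choose α01 h01 α10 h10 hcon herr using fun g => exists_error_eq_abs_sub (π1 g) (hp g)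
    exact ⟨α01, α10, h01, h10, hcon, sum_congr rfl fun g _ => by rw [herr]⟩
  · rintro E ⟨α01, α10, h01, h10, hcon, rfl⟩
    exact sum_le_sum fun g _ => mul_le_mul_of_nonneg_left
      (abs_sub_le_error (hπ g) (h01 g).1 (h10 g).1 (hcon g)) (hw g)

theorem min_error_eq_total_variation {G : Type*} [Fintype G] (w π1 p1 : G → ℝ)
    (hw : ∀ g, 0 ≤ w g) (hwsum : ∑ g, w g = 1)
    (hπ : ∀ g, π1 g ∈ Set.Icc (0:ℝ) 1) (hp : ∀ g, p1 g ∈ Set.Icc (0:ℝ) 1) :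
    IsLeast { E : ℝ | ∃ α01 α10 : G → ℝ,
        (∀ g, α01 g ∈ Set.Icc (0:ℝ) 1) ∧ (∀ g, α10 g ∈ Set.Icc (0:ℝ) 1) ∧
        (∀ g, (1 - π1 g) * α01 g + π1 g * (1 - α10 g) = p1 g) ∧
        E = ∑ g, w g * ((1 - π1 g) * α01 g + π1 g * α10 g) }
      (∑ g, w g * |π1 g - p1 g|) :=
  min_error_eq_total_variation_general w π1 p1 hw hπ hp
end
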